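/- Let Θ be an MLL proof net and let Θ' be obtained from Θ by replacing a single ⊗-link (with premises A, B and conclusion A⊗B) by a ⅋-link with the same premises. Then Θ' is not an MLL proof net: there is a DR-switching S' for Θ' such that Θ'_{S'} is disconnected. -/

import Mathlib

/-- An MLL link: an ID-link (axiom link) with two conclusions,
a tensor link or a par link with two premises and one conclusion. -/
inductive MLLLink (V : Type) where
  | idl (c₁ c₂ : V)
  | tensor (a b c : V)
  | par (a b c : V)
deriving DecidableEq

namespace MLLLink
variable {V V' : Type}

def prems : MLLLink V → List V
  | idl _ _ => []
  | tensor a b _ => [a, b]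
  | par a b _ => [a, b]

def concls : MLLLink V → List V
  | idl c₁ c₂ => [c₁, c₂]
  | tensor _ _ c => [c]
  | par _ _ c => [c]

def isId : MLLLink V → Bool
  | idl _ _ => true
  | _ => false

def isTensor : MLLLink V → Bool
  | tensor _ _ _ => true
  | _ => false

def isPar : MLLLink V → Bool
  | par _ _ _ => true
  | _ => false

/-- Relabel the vertices of a link along a map. -/
def map (f : V → V') : MLLLink V → MLLLink V'
  | idl c₁ c₂ => idl (f c₁) (f c₂)
  | tensor a b c => tensor (f a) (f b) (f c)
  | par a b c => par (f a) (f b) (f c)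

/-- Forget whether a multiplicative link is ⊗ or ⅋ (normalizing ⅋ to ⊗). -/
def forget : MLLLink V → MLLLink V
  | par a b c => tensor a b c
  | L => L

end MLLLink

/-- An MLL proof structure on the set `V` of formula occurrences:
every occurrence is the conclusion of exactly one link and the premise of
at most one link, and the occurrences appearing in a link are distinct. -/
structure MLLProofStructure (V : Type) [DecidableEq V] where
  links : Finset (MLLLink V)
  concl_exists : ∀ v : V, ∃ L ∈ links, v ∈ L.concls
  concl_unique : ∀ v : V, ∀ L ∈ links, ∀ L' ∈ links,
      v ∈ L.concls → v ∈ L'.concls → L = L'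
  prem_unique : ∀ v : V, ∀ L ∈ links, ∀ L' ∈ links,
      v ∈ L.prems → v ∈ L'.prems → L = L'
  nodup : ∀ L ∈ links, (L.prems ++ L.concls).Nodup

variable {V : Type} [DecidableEq V]

/-- The edge generated by a link under a DR-switching `S`
(`S L = true` selects the left premise of a ⅋-link). -/
def switchEdge (S : MLLLink V → Bool) (L : MLLLink V) (v w : V) : Prop :=
  match L with
  | .idl c₁ c₂ => v = c₁ ∧ w = c₂
  | .tensor a b c => (v = a ∧ w = c) ∨ (v = b ∧ w = c)
  | .par a b c =>
      (S (.par a b c) = true ∧ v = a ∧ w = c) ∨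
      (S (.par a b c) = false ∧ v = b ∧ w = c)

def drRel (Θ : MLLProofStructure V) (S : MLLLink V → Bool) (v w : V) : Prop :=
  ∃ L ∈ Θ.links, switchEdge S L v w

/-- The Danos–Regnier graph of a proof structure under a switching. -/
def drGraph (Θ : MLLProofStructure V) (S : MLLLink V → Bool) : SimpleGraph V :=
  SimpleGraph.fromRel (drRel Θ S)

/-- Danos–Regnier criterion: a proof net is a proof structure all of whose
DR-graphs are acyclic and connected. -/
def IsProofNet (Θ : MLLProofStructure V) : Prop :=
  ∀ S : MLLLink V → Bool, (drGraph Θ S).IsAcyclic ∧ (drGraph Θ S).Connected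

/-- The edges from `A` down to the conclusion of the link of which `A` is a premise. -/
def belowEdges (Θ : MLLProofStructure V) (A : V) : Set (Sym2 V) :=
  {e | ∃ L ∈ Θ.links, A ∈ L.prems ∧ ∃ c ∈ L.concls, e = s(A, c)}

/-- The DR-graph with the edge below `A` deleted. -/
def empGraph (Θ : MLLProofStructure V) (S : MLLLink V → Bool) (A : V) : SimpleGraph V :=
  (drGraph Θ S).deleteEdges (belowEdges Θ A)

/-- The vertex set of `Θ_S^A`: the connected component of `A` in the DR-graph
after deleting the edge below `A`. -/
def empComp (Θ : MLLProofStructure V) (S : MLLLink V → Bool) (A : V) : Set V :=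
  {v | (empGraph Θ S A).Reachable A v}

/-- The empire of `A` in `Θ`. -/
def empire (Θ : MLLProofStructure V) (A : V) : Set V :=
  ⋂ S : MLLLink V → Bool, empComp Θ S A

/-- A conclusion of `Θ` is a formula occurrence which is a premise of no link. -/
def IsConclusion (Θ : MLLProofStructure V) (v : V) : Prop :=
  ∀ L ∈ Θ.links, v ∉ L.prems

/-- All premises and conclusions of a link lie in `X`. -/
def allIn (X : Set V) (L : MLLLink V) : Prop :=
  (∀ w ∈ L.prems, w ∈ X) ∧ (∀ w ∈ L.concls, w ∈ X)

/-- `X` together with the links of `Θ` contained in `X` forms a proof structure. -/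
def IsSubProofStructure (Θ : MLLProofStructure V) (X : Set V) : Prop :=
  ∀ v ∈ X, ∃ L ∈ Θ.links, v ∈ L.concls ∧ allIn X L

def subDrRel (Θ : MLLProofStructure V) (X : Set V) (S : MLLLink V → Bool)
    (v w : V) : Prop :=
  ∃ L ∈ Θ.links, allIn X L ∧ switchEdge S L v w

/-- The DR-graph of the substructure of `Θ` induced on `X`. -/
def subDrGraph (Θ : MLLProofStructure V) (X : Set V) (S : MLLLink V → Bool) :
    SimpleGraph V :=
  SimpleGraph.fromRel (subDrRel Θ X S)

/-- `X` is a sub-proof net of `Θ`: it induces a proof structure whose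
DR-graphs are all acyclic and connected (on `X`). -/
def IsSubProofNet (Θ : MLLProofStructure V) (X : Set V) : Prop :=
  IsSubProofStructure Θ X ∧
    ∀ S : MLLLink V → Bool, (subDrGraph Θ X S).IsAcyclic ∧
      ∀ v ∈ X, ∀ w ∈ X, (subDrGraph Θ X S).Reachable v w

/-- `A` is a conclusion of the substructure induced on `X`. -/
def IsConclusionOfSub (Θ : MLLProofStructure V) (X : Set V) (A : V) : Prop :=
  A ∈ X ∧ ∀ L ∈ Θ.links, allIn X L → A ∉ L.prems

/-- `e` is an isomorphism of the underlying link graphs of `Θ₁` and `Θ₂`,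
forgetting the ⊗/⅋ labels: they witness that `Θ₁` and `Θ₂` are in the same PS-family. -/
def FamilyIso {V₁ V₂ : Type} [DecidableEq V₁] [DecidableEq V₂]
    (Θ₁ : MLLProofStructure V₁) (Θ₂ : MLLProofStructure V₂) (e : V₁ ≃ V₂) : Prop :=
  Θ₁.links.image (fun L => (L.map e).forget) = Θ₂.links.image MLLLink.forget

/-- The number of (multiplicative) links at which the ⊗/⅋-labellings of
`Θ₁` and `Θ₂` differ along `e`. -/
def diffCount {V₁ V₂ : Type} [DecidableEq V₁] [DecidableEq V₂]
    (Θ₁ : MLLProofStructure V₁) (Θ₂ : MLLProofStructure V₂) (e : V₁ ≃ V₂) : ℕ :=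
  (Θ₁.links.filter (fun L => L.map e ∉ Θ₂.links)).card

/-! Switch the new ⅋-link to one premise `Y` of the old ⊗-link `A ⊗ B ⊢ C`, and every other ⅋-link
arbitrarily. The resulting DR-graph of `Θ'` is that of `Θ` (under the same switching) with the edge
`X — C` from the other premise `X` removed. Since the DR-graph of `Θ` is acyclic, that edge is a bridge,
so `X` and `C` become disconnected. The only care needed is that no other link contributes an edge
`X — C`: this would be a link with premise `C` and conclusion `X`, and since `C` is the premise of at
most one link, which has a single conclusion, one of `A`, `B` can serve as `X`. -/

theorem SimpleGraph.not_connected_of_le_deleteEdges {α : Type} {G H : SimpleGraph α} {x y : α}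
    (hG : G.IsAcyclic) (hxy : G.Adj x y) (hH : H ≤ G.deleteEdges {s(x, y)}) : ¬ H.Connected :=
  fun hconn => SimpleGraph.isBridge_iff.mp
    (SimpleGraph.isAcyclic_iff_forall_adj_isBridge.mp hG hxy) ((hconn.preconnected x y).mono hH)

theorem SimpleGraph.fromRel_le_deleteEdges {α : Type} {r r' : α → α → Prop} {e : Sym2 α}
    (h : ∀ v w, r' v w → r v w ∧ s(v, w) ≠ e) :
    SimpleGraph.fromRel r' ≤ (SimpleGraph.fromRel r).deleteEdges {e} := by
  rintro v w ⟨hvw, hr | hr⟩ <;>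
    simp only [SimpleGraph.deleteEdges_adj, SimpleGraph.fromRel_adj, Set.mem_singleton_iff]
  · exact ⟨⟨hvw, Or.inl (h v w hr).1⟩, (h v w hr).2⟩
  · exact ⟨⟨hvw, Or.inr (h w v hr).1⟩, Sym2.eq_swap ▸ (h w v hr).2⟩

theorem MLLLink.eq_of_mem_concls_of_prems_ne_nil {α : Type} {L : MLLLink α} {v w : α}
    (hL : L.prems ≠ []) (hv : v ∈ L.concls) (hw : w ∈ L.concls) : v = w := by
  cases L <;> simp_all [MLLLink.prems, MLLLink.concls]

theorem switchEdge_mem {α : Type} {S : MLLLink α → Bool} {L : MLLLink α} {v w : α}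
    (h : switchEdge S L v w) : w ∈ L.concls ∧ (v ∈ L.prems ∨ v ∈ L.concls) := by
  cases L <;> simp only [switchEdge] at h <;> grind [MLLLink.prems, MLLLink.concls]

theorem switchEdge_tensor_of_par {α : Type} {S : MLLLink α → Bool} {a b c v w : α}
    (h : switchEdge S (.par a b c) v w) : switchEdge S (.tensor a b c) v w := by
  rcases h with ⟨_, h⟩ | ⟨_, h⟩
  exacts [Or.inl h, Or.inr h]

namespace MLLProofStructure

theorem tensor_ne {Θ : MLLProofStructure V} {a b c : V} (hL : MLLLink.tensor a b c ∈ Θ.links) :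
    a ≠ b ∧ a ≠ c ∧ b ≠ c := by
  simpa [MLLLink.prems, MLLLink.concls, and_assoc] using Θ.nodup _ hL

theorem exists_not_concl_of_prem (Θ : MLLProofStructure V) {A B : V} (hAB : A ≠ B) (C : V) :
    ∃ X, (X = A ∨ X = B) ∧ ∀ L ∈ Θ.links, C ∈ L.prems → X ∉ L.concls := by
  by_contra! h
  obtain ⟨L, hL, hCL, hAL⟩ := h A (Or.inl rfl)
  obtain ⟨L', hL', hCL', hBL'⟩ := h B (Or.inr rfl)
  obtain rfl := Θ.prem_unique C L hL L' hL' hCL hCL'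
  exact hAB (MLLLink.eq_of_mem_concls_of_prems_ne_nil (List.ne_nil_of_mem hCL) hAL hBL')

end MLLProofStructure

theorem drGraph_adj_of_tensor {Θ : MLLProofStructure V} {S : MLLLink V → Bool} {a b c x : V}
    (hL : MLLLink.tensor a b c ∈ Θ.links) (hx : x = a ∨ x = b) : (drGraph Θ S).Adj x c := by
  obtain ⟨hab, hac, hbc⟩ := MLLProofStructure.tensor_ne hL
  refine (SimpleGraph.fromRel_adj _ _ _).mpr ⟨?_, Or.inl ⟨_, hL, ?_⟩⟩ <;>
    rcases hx with rfl | rfl <;> simp [switchEdge, *]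

theorem drRel_of_tensor_to_par {Θ Θ' : MLLProofStructure V} {A B C X : V} {S : MLLLink V → Bool}
    (hL : MLLLink.tensor A B C ∈ Θ.links)
    (h' : Θ'.links = insert (MLLLink.par A B C) (Θ.links.erase (MLLLink.tensor A B C)))
    (hX : ∀ L ∈ Θ.links, C ∈ L.prems → X ∉ L.concls)
    (hS : ¬ switchEdge S (.par A B C) X C) {v w : V} (hvw : drRel Θ' S v w) :
    drRel Θ S v w ∧ s(v, w) ≠ s(X, C) := by
  obtain ⟨-, hAC, hBC⟩ := MLLProofStructure.tensor_ne hL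
  obtain ⟨L, hL', hLvw⟩ := hvw
  rw [h', Finset.mem_insert] at hL'
  rcases hL' with rfl | hLe
  · refine ⟨⟨_, hL, switchEdge_tensor_of_par hLvw⟩, fun he => ?_⟩
    rcases hLvw with ⟨_, rfl, rfl⟩ | ⟨_, rfl, rfl⟩ <;>
      rcases Sym2.eq_iff.mp he with ⟨rfl, -⟩ | ⟨rfl, -⟩ <;> simp_all [switchEdge]
  · obtain ⟨hLne, hLΘ⟩ := Finset.mem_erase.mp hLe
    have hC : C ∉ L.concls := fun hC =>
      hLne (Θ.concl_unique C L hLΘ _ hL hC (by simp [MLLLink.concls]))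
    refine ⟨⟨L, hLΘ, hLvw⟩, fun he => ?_⟩
    obtain ⟨hw, hv⟩ := switchEdge_mem hLvw
    rcases Sym2.eq_iff.mp he with ⟨-, rfl⟩ | ⟨rfl, rfl⟩
    · exact hC hw
    · exact hv.elim (fun hv => hX L hLΘ hv hw) hC

/-- Replacing a single ⊗-link of an MLL proof net by a ⅋-link with the same
premises yields a structure with a disconnected DR-graph: not a proof net. -/
theorem tensor_to_par_disconnected (Θ Θ' : MLLProofStructure V)
    (hΘ : IsProofNet Θ) (A B C : V) (hL : MLLLink.tensor A B C ∈ Θ.links)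
    (h' : Θ'.links =
      insert (MLLLink.par A B C) (Θ.links.erase (MLLLink.tensor A B C))) :
    ∃ S' : MLLLink V → Bool, ¬ (drGraph Θ' S').Connected := by
  obtain ⟨hAB, -, -⟩ := MLLProofStructure.tensor_ne hL
  obtain ⟨X, hXAB, hX⟩ := Θ.exists_not_concl_of_prem hAB C
  let S : MLLLink V → Bool := fun _ => decide (X = B)
  have hS : ¬ switchEdge S (.par A B C) X C := by
    rcases hXAB with rfl | rfl <;> simp [S, switchEdge, hAB, hAB.symm]
  exact ⟨S, SimpleGraph.not_connected_of_le_deleteEdges (hΘ S).1 (drGraph_adj_of_tensor hL hXAB)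
    (SimpleGraph.fromRel_le_deleteEdges fun _ _ => drRel_of_tensor_to_par hL h' hX hS)⟩
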